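/- arXiv:gr-qc/0306033 — 2 statements merged into one kernel-verified Lean document; each statement's English description precedes it below -/
import Mathlib

section
/- Let u ∈ ℝ³, ρ, ε ∈ ℝ, and define U_{μσ} = ∑_λ ε_{μσλ} u_λ and R_{μσαβ} = ρ ε U_{μσ} U_{αβ}. Then R has all the symmetry properties of the Riemann tensor: R_{μσαβ} = −R_{σμαβ}, R_{μσαβ} = −R_{μσβα}, R_{μσαβ} = R_{αβμσ}, and the first Bianchi (cyclic) identity R_{μσαβ} + R_{μαβσ} + R_{μβσα} = 0 holds for all indices. -/
/-!
`U` is antisymmetric because `ε` is, and `R` is a multiple of `U ⊗ U`; this gives the three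
pair symmetries at once. The cyclic sum `U_{μσ} U_{αβ} + U_{μα} U_{βσ} + U_{μβ} U_{σα}` is
totally antisymmetric in its four indices, and four indices in `{1, 2, 3}` cannot be distinct,
so it vanishes: this is the first Bianchi identity.
-/

open scoped BigOperators

/-- The totally antisymmetric Levi-Civita symbol on three indices, with `ε 0 1 2 = 1`. -/
def leviCivita3 (i j k : Fin 3) : ℝ :=
  if (i, j, k) = (0, 1, 2) ∨ (i, j, k) = (1, 2, 0) ∨ (i, j, k) = (2, 0, 1) then 1
  else if (i, j, k) = (0, 2, 1) ∨ (i, j, k) = (2, 1, 0) ∨ (i, j, k) = (1, 0, 2) then -1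
  else 0

lemma leviCivita3_swap (i j k : Fin 3) : leviCivita3 j i k = -leviCivita3 i j k := by
  fin_cases i <;> fin_cases j <;> fin_cases k <;> simp [leviCivita3]

lemma Fintype.eq_or_eq_of_card_lt_four {ι : Type*} [Fintype ι] (hcard : Fintype.card ι < 4)
    (a b c d : ι) : a = b ∨ a = c ∨ a = d ∨ b = c ∨ c = d ∨ d = b := by
  obtain ⟨x, y, hxy, heq⟩ :=
    Fintype.exists_ne_map_eq_of_card_lt ![a, b, c, d] (by simpa using hcard)
  fin_cases x <;> fin_cases y <;> simp_all [eq_comm]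

section BianchiSum

variable {ι R : Type*} [CommRing R]

def bianchiSum (U : ι → ι → R) (μ σ α β : ι) : R :=
  U μ σ * U α β + U μ α * U β σ + U μ β * U σ α

lemma bianchiSum_rotate (U : ι → ι → R) (μ σ α β : ι) :
    bianchiSum U μ σ α β = bianchiSum U μ α β σ := by
  unfold bianchiSum; ring

variable {U : ι → ι → R} (hdiag : ∀ i, U i i = 0) (hanti : ∀ i j, U j i = -U i j)
include hdiag hanti

lemma bianchiSum_self_left (μ α β : ι) : bianchiSum U μ μ α β = 0 := by
  rw [bianchiSum, hdiag, hanti μ β]; ring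

lemma bianchiSum_self_right (μ σ β : ι) : bianchiSum U μ σ σ β = 0 := by
  rw [bianchiSum, hdiag, hanti σ β]; ring

lemma bianchiSum_eq_zero [Fintype ι] (hcard : Fintype.card ι < 4) (μ σ α β : ι) :
    bianchiSum U μ σ α β = 0 := by
  have rotate := bianchiSum_rotate U
  rcases Fintype.eq_or_eq_of_card_lt_four hcard μ σ α β with h | h | h | h | h | h <;> subst h
  · exact bianchiSum_self_left hdiag hanti _ _ _
  · rw [rotate]; exact bianchiSum_self_left hdiag hanti _ _ _
  · rw [rotate, rotate]; exact bianchiSum_self_left hdiag hanti _ _ _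
  · exact bianchiSum_self_right hdiag hanti _ _ _
  · rw [rotate]; exact bianchiSum_self_right hdiag hanti _ _ _
  · rw [rotate, rotate]; exact bianchiSum_self_right hdiag hanti _ _ _

end BianchiSum

/-- The skeleton-space Riemann tensor `R_{μσαβ} = ρ ε U_{μσ} U_{αβ}` of a parallel
bundle of bones has all the symmetry properties of the Riemann tensor, including the
first Bianchi (cyclic) identity. -/
theorem skeleton_riemann_symmetries (u : EuclideanSpace ℝ (Fin 3)) (ρ ε : ℝ)
    (U : Fin 3 → Fin 3 → ℝ)
    (hU : ∀ μ σ : Fin 3, U μ σ = ∑ l : Fin 3, leviCivita3 μ σ l * u l)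
    (R : Fin 3 → Fin 3 → Fin 3 → Fin 3 → ℝ)
    (hR : ∀ μ σ α β : Fin 3, R μ σ α β = ρ * ε * U μ σ * U α β) :
    (∀ μ σ α β : Fin 3, R μ σ α β = -R σ μ α β) ∧
    (∀ μ σ α β : Fin 3, R μ σ α β = -R μ σ β α) ∧
    (∀ μ σ α β : Fin 3, R μ σ α β = R α β μ σ) ∧
    (∀ μ σ α β : Fin 3, R μ σ α β + R μ α β σ + R μ β σ α = 0) := by
  have hanti : ∀ μ σ, U σ μ = -U μ σ := fun μ σ => by
    simp only [hU, leviCivita3_swap μ σ, neg_mul, Finset.sum_neg_distrib]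
  have hdiag : ∀ μ, U μ μ = 0 := fun μ => by linarith [hanti μ μ]
  refine ⟨fun μ σ α β => ?_, fun μ σ α β => ?_, fun μ σ α β => ?_, fun μ σ α β => ?_⟩
  · rw [hR, hR, hanti σ μ]; ring
  · rw [hR, hR, hanti β α]; ring
  · rw [hR, hR]; ring
  · have hbianchi := bianchiSum_eq_zero hdiag hanti (by simp) μ σ α β
    rw [bianchiSum] at hbianchi
    rw [hR, hR, hR]
    linear_combination ρ * ε * hbianchi
end

section
/- Let p range over a finite index set, let ε_p ∈ ℝ and u^p ∈ ℝ³ be constants, let ρ_p : ℝ³ → ℝ be differentiable at x ∈ ℝ³, and define U^p_{μν} = ∑_λ ε_{μνλ} u^p_λ and R_{αβλδ}(y) = ∑_p ε_p ρ_p(y) U^p_{αβ} U^p_{λδ}. Then for all indices α, β, λ, δ, γ ∈ {1,2,3}, the Bianchi combination satisfies ∂_γ R_{αβλδ}(x) + ∂_λ R_{αβδγ}(x) + ∂_δ R_{αβγλ}(x) = ε_{γλδ} ∑_p ε_p U^p_{αβ} (u^p · ∇ρ_p(x)), where ∂_μ denotes the partial derivative in the μ-th coordinate direction and u^p · ∇ρ_p(x)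 = ∑_ν u^p_ν ∂_ν ρ_p(x). -/
open scoped BigOperators

/-- The partial derivative of `f : ℝ³ → ℝ` at `x` in the `ν`-th coordinate direction. -/
noncomputable def pderiv3 (ν : Fin 3) (f : EuclideanSpace ℝ (Fin 3) → ℝ)
    (x : EuclideanSpace ℝ (Fin 3)) : ℝ :=
  fderiv ℝ f x (EuclideanSpace.single ν 1)

/- Schouten's identity: antisymmetrising over four indices in three dimensions gives zero. -/
theorem leviCivita3_cyclic_sum_mul (v D : Fin 3 → ℝ) (γ lam δ : Fin 3) :
    (∑ l, leviCivita3 lam δ l * v l) * D γ + (∑ l, leviCivita3 δ γ l * v l) * D lam +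
        (∑ l, leviCivita3 γ lam l * v l) * D δ =
      leviCivita3 γ lam δ * ∑ ν, v ν * D ν := by
  fin_cases γ <;> fin_cases lam <;> fin_cases δ <;>
    simp [leviCivita3, Fin.sum_univ_three, Prod.ext_iff] <;> ring

theorem pderiv3_sum_const_mul {ι : Type*} (s : Finset ι) (c : ι → ℝ)
    (f : ι → EuclideanSpace ℝ (Fin 3) → ℝ) (x : EuclideanSpace ℝ (Fin 3))
    (hf : ∀ p ∈ s, DifferentiableAt ℝ (f p) x) (ν : Fin 3) :
    pderiv3 ν (fun y => ∑ p ∈ s, c p * f p y) x = ∑ p ∈ s, c p * pderiv3 ν (f p) x := by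
  unfold pderiv3
  rw [fderiv_fun_sum fun p hp => (hf p hp).const_mul _, _root_.sum_apply]
  refine Finset.sum_congr rfl fun p hp => ?_
  rw [fderiv_const_mul (hf p hp)]
  rfl

/-- For bundles of parallel bones with deficits `ε p`, directions `u p`, densities
`ρ p`, orientation tensors `U p` and approximate Riemann tensor
`R_{αβλδ}(y) = ∑ p, ε p ρ p y U^p_{αβ} U^p_{λδ}`, the Bianchi combination satisfies
`∂_γ R_{αβλδ} + ∂_λ R_{αβδγ} + ∂_δ R_{αβγλ} = ε_{γλδ} ∑ p, ε_p U^p_{αβ} (u^p · ∇ρ_p)`. -/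
theorem skeleton_bianchi_combination {ι : Type*} [Fintype ι]
    (ε : ι → ℝ) (u : ι → EuclideanSpace ℝ (Fin 3))
    (ρ : ι → EuclideanSpace ℝ (Fin 3) → ℝ) (x : EuclideanSpace ℝ (Fin 3))
    (hρ : ∀ p, DifferentiableAt ℝ (ρ p) x)
    (U : ι → Fin 3 → Fin 3 → ℝ)
    (hU : ∀ p, ∀ μ ν : Fin 3, U p μ ν = ∑ l : Fin 3, leviCivita3 μ ν l * u p l)
    (R : Fin 3 → Fin 3 → Fin 3 → Fin 3 → EuclideanSpace ℝ (Fin 3) → ℝ)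
    (hR : ∀ α β lam δ : Fin 3, ∀ y,
      R α β lam δ y = ∑ p, ε p * ρ p y * U p α β * U p lam δ) :
    ∀ α β lam δ γ : Fin 3,
      pderiv3 γ (R α β lam δ) x + pderiv3 lam (R α β δ γ) x +
          pderiv3 δ (R α β γ lam) x =
        leviCivita3 γ lam δ *
          ∑ p, ε p * U p α β * (∑ ν : Fin 3, u p ν * pderiv3 ν (ρ p) x) := by
  intro α β lam δ γ
  have pderiv_R : ∀ m n ν : Fin 3,
      pderiv3 ν (R α β m n) x = ∑ p, ε p * U p α β * U p m n * pderiv3 ν (ρ p) x := by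
    intro m n ν
    have hR' : R α β m n = fun y => ∑ p, ε p * U p α β * U p m n * ρ p y := by
      funext y
      rw [hR]
      exact Finset.sum_congr rfl fun p _ => by ring
    rw [hR', pderiv3_sum_const_mul _ _ _ _ fun p _ => hρ p]
  rw [pderiv_R, pderiv_R, pderiv_R, ← Finset.sum_add_distrib, ← Finset.sum_add_distrib,
    Finset.mul_sum]
  refine Finset.sum_congr rfl fun p _ => ?_
  rw [hU p lam δ, hU p δ γ, hU p γ lam]
  linear_combination (ε p * U p α β) *
    leviCivita3_cyclic_sum_mul (u p ·) (pderiv3 · (ρ p) x) γ lam δ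
end
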